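/- In the one-hidden-layer ReLU ANN setting with constant target α, the inner product of the gradient of the Lyapunov function V(φ) = ‖φ‖² + (φ_{3H+1} − 2α)² with the generalized gradient G(φ) equals eight times the risk: ⟨(∇V)(φ), G(φ)⟩ = 8 L_∞(φ) for every φ ∈ ℝ^{3H+1}. -/

import Mathlib

open MeasureTheory

noncomputable section

/-- weight parameters -/
def wp (H : ℕ) (φ : EuclideanSpace ℝ (Fin (3*H+1))) (j : Fin H) : ℝ := φ ⟨j.1, by omega⟩
/-- bias parameters -/
def bp (H : ℕ) (φ : EuclideanSpace ℝ (Fin (3*H+1))) (j : Fin H) : ℝ := φ ⟨H + j.1, by omega⟩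
/-- outer weight parameters -/
def vp (H : ℕ) (φ : EuclideanSpace ℝ (Fin (3*H+1))) (j : Fin H) : ℝ := φ ⟨2*H + j.1, by omega⟩
/-- output bias -/
def cp (H : ℕ) (φ : EuclideanSpace ℝ (Fin (3*H+1))) : ℝ := φ ⟨3*H, by omega⟩

/-- realization of the one-hidden-layer ReLU network -/
def realization (H : ℕ) (φ : EuclideanSpace ℝ (Fin (3*H+1))) (x : ℝ) : ℝ :=
  cp H φ + ∑ j : Fin H, vp H φ j * max (wp H φ j * x + bp H φ j) 0

/-- risk with constant target α -/
def risk (H : ℕ) (α : ℝ) (φ : EuclideanSpace ℝ (Fin (3*H+1))) : ℝ :=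
  ∫ y in (0:ℝ)..1, (realization H φ y - α)^2

/-- activity interval I_j^φ -/
def actSet (H : ℕ) (φ : EuclideanSpace ℝ (Fin (3*H+1))) (j : Fin H) : Set ℝ :=
  {x | x ∈ Set.Icc (0:ℝ) 1 ∧ 0 < wp H φ j * x + bp H φ j}

/-- generalized gradient G -/
def grad (H : ℕ) (α : ℝ) (φ : EuclideanSpace ℝ (Fin (3*H+1))) :
    EuclideanSpace ℝ (Fin (3*H+1)) := WithLp.toLp 2 fun i =>
  if h : i.1 < H then
    2 * vp H φ ⟨i.1, h⟩ * ∫ x in actSet H φ ⟨i.1, h⟩, x * (realization H φ x - α)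
  else if h2 : i.1 < 2*H then
    2 * vp H φ ⟨i.1 - H, by omega⟩ * ∫ x in actSet H φ ⟨i.1 - H, by omega⟩, (realization H φ x - α)
  else if h3 : i.1 < 3*H then
    2 * ∫ x in (0:ℝ)..1,
      max (wp H φ ⟨i.1 - 2*H, by omega⟩ * x + bp H φ ⟨i.1 - 2*H, by omega⟩) 0 * (realization H φ x - α)
  else 2 * ∫ x in (0:ℝ)..1, (realization H φ x - α)

/-- Lyapunov function V -/
def lyap (H : ℕ) (α : ℝ) (φ : EuclideanSpace ℝ (Fin (3*H+1))) : ℝ :=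
  ‖φ‖^2 + (cp H φ - 2*α)^2

/-!
Since `⟪∇V(φ), G(φ)⟫ = DV(φ)(G(φ)) = 2⟪φ, G⟫ + 2 (c - 2α) G_{3H+1}`, the claim is an algebraic
identity between components of `G`. Positive homogeneity of the ReLU gives, neuron by neuron,
the Euler identity `w_j G_j + b_j G_{H+j} = v_j G_{2H+j}`, and expanding one factor of
`(N - α)² = (N - α) ((c - α) + ∑ v_j max (w_j x + b_j) 0)` gives
`2 L = (c - α) G_{3H+1} + ∑ v_j G_{2H+j}`; the directional derivative is then `4 · 2 L`.
-/

open scoped RealInnerProductSpace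

theorem setIntegral_max_zero_mul {X : Type*} [MeasurableSpace X] {μ : Measure X} {s : Set X}
    {f g : X → ℝ} (hf : Measurable f) :
    ∫ x in s, max (f x) 0 * g x ∂μ = ∫ x in s ∩ {x | 0 < f x}, f x * g x ∂μ := by
  rw [← setIntegral_indicator (measurableSet_lt measurable_const hf)]
  congr with x
  by_cases hx : 0 < f x
  · simp [hx, hx.le]
  · simp [hx, not_lt.mp hx]

theorem intervalIntegral_max_affine_mul (w b : ℝ) {g : ℝ → ℝ} (hg : Continuous g) :
    ∫ x in (0:ℝ)..1, max (w * x + b) 0 * g x =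
      w * (∫ x in {x | x ∈ Set.Icc (0:ℝ) 1 ∧ 0 < w * x + b}, x * g x) +
        b * ∫ x in {x | x ∈ Set.Icc (0:ℝ) 1 ∧ 0 < w * x + b}, g x := by
  have hint : ∀ {h : ℝ → ℝ}, Continuous h →
      IntegrableOn h {x | x ∈ Set.Icc (0:ℝ) 1 ∧ 0 < w * x + b} :=
    fun hh ↦ hh.integrableOn_Icc.mono_set fun _ hx ↦ hx.1
  rw [intervalIntegral.integral_of_le zero_le_one, ← integral_Icc_eq_integral_Ioc,
    setIntegral_max_zero_mul (by fun_prop), ← integral_const_mul, ← integral_const_mul,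
    ← integral_add ((hint (by fun_prop)).const_mul _) ((hint hg).const_mul _)]
  congr with x
  ring

theorem Fin.sum_univ_three_mul_add_one {M : Type*} [AddCommMonoid M] (H : ℕ)
    (f : Fin (3*H+1) → M) :
    ∑ i, f i = ∑ j : Fin H, (f ⟨j, by omega⟩ + f ⟨H + j, by omega⟩ + f ⟨2*H + j, by omega⟩) +
      f ⟨3*H, by omega⟩ := by
  let F : ℕ → M := fun i ↦ if h : i < 3*H+1 then f ⟨i, h⟩ else 0
  have hF : ∀ (i : ℕ) (k : Fin (3*H+1)), i = k → F i = f k := by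
    rintro _ k rfl
    exact dif_pos k.2
  calc ∑ i, f i = ∑ i ∈ Finset.range (H + H + H + 1), F i := by
        rw [Finset.sum_range]
        exact Fintype.sum_equiv (finCongr (by omega)) _ _ fun i ↦ (hF _ _ rfl).symm
    _ = _ := by
        rw [Finset.sum_range_succ, Finset.sum_range_add, Finset.sum_range_add,
          Finset.sum_add_distrib, Finset.sum_add_distrib]
        simp only [Finset.sum_range]
        congr 1
        · refine congrArg₂ _ (congrArg₂ _ ?_ ?_) ?_ <;>
            exact Finset.sum_congr rfl fun j _ ↦ hF _ _ (by simp <;> omega)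
        · exact hF _ _ (by simp; omega)

section Network

variable (H : ℕ) (α : ℝ) (φ : EuclideanSpace ℝ (Fin (3*H+1)))

theorem continuous_realization_sub : Continuous fun x ↦ realization H φ x - α := by
  unfold realization
  fun_prop

theorem grad_apply_weight (j : Fin H) : grad H α φ ⟨j, by omega⟩ =
    2 * vp H φ j * ∫ x in actSet H φ j, x * (realization H φ x - α) := by
  simp [grad]

theorem grad_apply_bias (j : Fin H) : grad H α φ ⟨H + j, by omega⟩ =
    2 * vp H φ j * ∫ x in actSet H φ j, (realization H φ x - α) := by
  simp [grad, show H + j < 2*H by omega]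

theorem grad_apply_outerWeight (j : Fin H) : grad H α φ ⟨2*H + j, by omega⟩ =
    2 * ∫ x in (0:ℝ)..1, max (wp H φ j * x + bp H φ j) 0 * (realization H φ x - α) := by
  simp [grad, show ¬ 2*H + j < H by omega, show ¬ 2*H + j < 2*H by omega,
    show 2*H + j < 3*H by omega]

theorem grad_apply_outputBias : grad H α φ ⟨3*H, by omega⟩ =
    2 * ∫ x in (0:ℝ)..1, (realization H φ x - α) := by
  simp [grad, show ¬ 3*H < H by omega, show ¬ 3*H < 2*H by omega]

theorem wp_mul_grad_add_bp_mul_grad (j : Fin H) :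
    wp H φ j * grad H α φ ⟨j, by omega⟩ + bp H φ j * grad H α φ ⟨H + j, by omega⟩ =
      vp H φ j * grad H α φ ⟨2*H + j, by omega⟩ := by
  rw [grad_apply_weight, grad_apply_bias, grad_apply_outerWeight,
    intervalIntegral_max_affine_mul _ _ (continuous_realization_sub H α φ)]
  unfold actSet
  ring

theorem two_mul_risk : 2 * risk H α φ =
    (cp H φ - α) * grad H α φ ⟨3*H, by omega⟩ +
      ∑ j, vp H φ j * grad H α φ ⟨2*H + j, by omega⟩ := by
  have hN := continuous_realization_sub H α φ
  have hsq : ∀ x, (realization H φ x - α) ^ 2 = (cp H φ - α) * (realization H φ x - α) +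
      ∑ j, vp H φ j * (max (wp H φ j * x + bp H φ j) 0 * (realization H φ x - α)) := fun x ↦ by
    simp only [← mul_assoc, ← Finset.sum_mul, ← add_mul]
    unfold realization
    ring
  simp only [risk, hsq, grad_apply_outputBias, grad_apply_outerWeight]
  rw [intervalIntegral.integral_add ((hN.const_mul _).intervalIntegrable 0 1)
      ((continuous_finsetSum _ fun j _ ↦ by fun_prop).intervalIntegrable 0 1),
    intervalIntegral.integral_finsetSum fun j _ ↦
      (by fun_prop : Continuous _).intervalIntegrable 0 1]
  simp only [intervalIntegral.integral_const_mul]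
  rw [mul_add, Finset.mul_sum]
  congr 1
  · ring
  · exact Finset.sum_congr rfl fun _ _ ↦ by ring

theorem inner_eq_sum_blocks (y : EuclideanSpace ℝ (Fin (3*H+1))) :
    ⟪φ, y⟫ = ∑ j, (wp H φ j * y ⟨j, by omega⟩ + bp H φ j * y ⟨H + j, by omega⟩ +
      vp H φ j * y ⟨2*H + j, by omega⟩) + cp H φ * y ⟨3*H, by omega⟩ := by
  rw [PiLp.inner_apply, Fin.sum_univ_three_mul_add_one]
  simp [mul_comm, wp, bp, vp, cp]

theorem fderiv_lyap_apply (y : EuclideanSpace ℝ (Fin (3*H+1))) :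
    fderiv ℝ (lyap H α) φ y = 2 * ⟪φ, y⟫ + 2 * (cp H φ - 2 * α) * y ⟨3*H, by omega⟩ := by
  let e : EuclideanSpace ℝ (Fin (3*H+1)) →L[ℝ] ℝ := EuclideanSpace.proj ⟨3*H, by omega⟩
  have hcp : HasFDerivAt (fun ψ ↦ cp H ψ - 2 * α) e φ := e.hasFDerivAt.sub_const (2 * α)
  change fderiv ℝ (fun ψ ↦ ‖ψ‖ ^ 2 + (cp H ψ - 2 * α) ^ 2) φ y = _
  rw [((hasStrictFDerivAt_norm_sq φ).hasFDerivAt.fun_add (hcp.pow 2)).fderiv]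
  simp [e, cp]

end Network

theorem inner_gradV_grad_eq_general (H : ℕ) (α : ℝ)
    (φ : EuclideanSpace ℝ (Fin (3*H+1))) :
    (inner ℝ (gradient (lyap H α) φ) (grad H α φ) : ℝ) = 8 * risk H α φ := by
  have hblock : ∀ j : Fin H, wp H φ j * grad H α φ ⟨j, by omega⟩ +
      bp H φ j * grad H α φ ⟨H + j, by omega⟩ + vp H φ j * grad H α φ ⟨2*H + j, by omega⟩ =
      2 * (vp H φ j * grad H α φ ⟨2*H + j, by omega⟩) := fun j ↦ by
    rw [wp_mul_grad_add_bp_mul_grad]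
    ring
  rw [inner_gradient_left, fderiv_lyap_apply, inner_eq_sum_blocks,
    Finset.sum_congr rfl fun j _ ↦ hblock j, ← Finset.mul_sum]
  linear_combination (-4) * two_mul_risk H α φ

theorem inner_gradV_grad_eq (H : ℕ) (hH : 0 < H) (α : ℝ)
    (φ : EuclideanSpace ℝ (Fin (3*H+1))) :
    (inner ℝ (gradient (lyap H α) φ) (grad H α φ) : ℝ) = 8 * risk H α φ :=
  inner_gradV_grad_eq_general H α φ
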